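/- arXiv:2310.15358 — 2 statements merged into one kernel-verified Lean document; each statement's English description precedes it below -/
import Mathlib

section
/- The function g₁ is strictly increasing on the interval [0, 2): for all real V₁, V₂ with 0 ≤ V₁ < V₂ < 2, g₁(V₁) < g₁(V₂). -/
open Real

/-- First branch of Gupta et al.'s helper function `f`. -/
noncomputable def g1 (V : ℝ) : ℝ := Real.log ((2 + V) / (2 - V)) - 2 * V / (2 + V)

lemma hasDerivAt_g1 {x : ℝ} (hx₀ : -2 < x) (hx₂ : x < 2) :
    HasDerivAt g1 (8 * x / ((2 - x) * (2 + x) ^ 2)) x := by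
  have hplus : 2 + x ≠ 0 := by linarith
  have hminus : 2 - x ≠ 0 := by linarith
  have hquot : HasDerivAt (fun V : ℝ => (2 + V) / (2 - V)) (4 / (2 - x) ^ 2) x :=
    (((hasDerivAt_id' x).const_add 2).div ((hasDerivAt_id' x).const_sub 2) hminus).congr_deriv
      (by ring)
  have hfrac : HasDerivAt (fun V : ℝ => 2 * V / (2 + V)) (4 / (2 + x) ^ 2) x :=
    (((hasDerivAt_id' x).const_mul 2).div ((hasDerivAt_id' x).const_add 2) hplus).congr_deriv
      (by ring)
  have hquot_ne_zero : (2 + x) / (2 - x) ≠ 0 := div_ne_zero hplus hminus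
  refine ((hquot.log hquot_ne_zero).sub hfrac : HasDerivAt g1 _ x).congr_deriv ?_
  field_simp
  ring

lemma strictMonoOn_g1 : StrictMonoOn g1 (Set.Ico 0 2) := by
  refine strictMonoOn_of_hasDerivWithinAt_pos (f' := fun x => 8 * x / ((2 - x) * (2 + x) ^ 2))
    (convex_Ico 0 2)
    (fun x hx => (hasDerivAt_g1 (by linarith [hx.1]) hx.2).continuousAt.continuousWithinAt)
    (fun x hx => ?_) (fun x hx => ?_)
  all_goals rw [interior_Ico] at hx
  · exact (hasDerivAt_g1 (by linarith [hx.1]) hx.2).hasDerivWithinAt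
  · have hminus : 0 < 2 - x := by linarith [hx.2]
    have hplus : 0 < 2 + x := by linarith [hx.1]
    exact div_pos (by linarith [hx.1]) (by positivity)

/-- `g₁` is strictly increasing on `[0, 2)`. -/
theorem g1_strictMonoOn :
    ∀ V₁ V₂ : ℝ, 0 ≤ V₁ → V₁ < V₂ → V₂ < 2 → g1 V₁ < g1 V₂ :=
  fun _ _ h₀ h₁₂ h₂ => strictMonoOn_g1 ⟨h₀, h₁₂.trans h₂⟩ ⟨h₀.trans h₁₂.le, h₂⟩ h₁₂
end

section
/- Let π ∈ (0, 1), let ε ∈ [0, 1], let T be any type (indexing downstream models), let d : T → ℝ satisfy 0 ≤ d(τ) ≤ 1 for all τ ∈ T, and let Ĩ ∈ ℝ satisfy ψ_π(d(τ)) ≤ Ĩ for every τ ∈ T. If Ĩ − ψ_π(ε) ≤ 0, then d(τ) ≤ ε for every τ ∈ T. -/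
open Real

/-- Gupta et al.'s helper function `f`. -/
noncomputable def f (V : ℝ) : ℝ := max (g1 V) (V ^ 2 / 2 + V ^ 4 / 36 + V ^ 6 / 288)

/-- Gupta et al.'s bound `ψ` for a binary sensitive attribute with `ℙ(S = 1) = p`. -/
noncomputable def psi (p Δ : ℝ) : ℝ := (1 - p) * f (p * Δ) + p * f ((1 - p) * Δ)

lemma log_gt_one_sub_inv {R : ℝ} (hR : 1 < R) : 1 - 1 / R < Real.log R := by
  have hRpos : 0 < R := lt_trans one_pos hR
  have h := Real.log_lt_sub_one_of_pos (x := 1 / R) (by positivity)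
    (by intro hh; rw [div_eq_one_iff_eq hRpos.ne'] at hh; linarith)
  rw [Real.log_div one_ne_zero hRpos.ne', Real.log_one] at h
  linarith

lemma g1_strict {a b : ℝ} (ha : 0 ≤ a) (hab : a < b) (hb : b < 2) : g1 a < g1 b := by
  have h2a : 0 < 2 + a := by linarith
  have h2a' : 0 < 2 - a := by linarith
  have h2b : 0 < 2 + b := by linarith
  have h2b' : 0 < 2 - b := by linarith
  set R : ℝ := ((2 + b) * (2 - a)) / ((2 - b) * (2 + a)) with hRdef
  have hR1 : 1 < R := by
    rw [hRdef, lt_div_iff₀ (by positivity)]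
    nlinarith
  have hlogR : Real.log R =
      Real.log ((2 + b) / (2 - b)) - Real.log ((2 + a) / (2 - a)) := by
    rw [hRdef, Real.log_div (by positivity) (by positivity),
      Real.log_mul h2b.ne' h2a'.ne', Real.log_mul h2b'.ne' h2a.ne',
      Real.log_div h2b.ne' h2b'.ne', Real.log_div h2a.ne' h2a'.ne']
    ring
  have hkey : 1 - 1 / R < Real.log ((2 + b) / (2 - b)) - Real.log ((2 + a) / (2 - a)) := by
    rw [← hlogR]; exact log_gt_one_sub_inv hR1
  have hRval : 1 - 1 / R = (4 * b - 4 * a) / ((2 + b) * (2 - a)) := by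
    rw [hRdef]
    field_simp
    ring
  have hineq : 2 * b / (2 + b) - 2 * a / (2 + a) ≤ (4 * b - 4 * a) / ((2 + b) * (2 - a)) := by
    rw [div_sub_div _ _ h2b.ne' h2a.ne', div_le_div_iff₀ (by positivity) (by positivity)]
    nlinarith [mul_nonneg (mul_nonneg (sub_nonneg.mpr hab.le) h2b.le) ha]
  unfold g1
  rw [hRval] at hkey
  linarith

lemma f_strict {a b : ℝ} (ha : 0 ≤ a) (hab : a < b) (hb : b < 2) : f a < f b := by
  have hpoly : a ^ 2 / 2 + a ^ 4 / 36 + a ^ 6 / 288 <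
      b ^ 2 / 2 + b ^ 4 / 36 + b ^ 6 / 288 := by
    have h2 : a ^ 2 < b ^ 2 := pow_lt_pow_left₀ hab ha (by norm_num)
    have h4 : a ^ 4 < b ^ 4 := pow_lt_pow_left₀ hab ha (by norm_num)
    have h6 : a ^ 6 < b ^ 6 := pow_lt_pow_left₀ hab ha (by norm_num)
    linarith
  unfold f
  exact max_lt (lt_of_lt_of_le (g1_strict ha hab hb) (le_max_left _ _))
    (lt_of_lt_of_le hpoly (le_max_right _ _))

lemma psi_strict {p a b : ℝ} (hp0 : 0 < p) (hp1 : p < 1)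
    (ha : 0 ≤ a) (hab : a < b) (hb : b ≤ 1) : psi p a < psi p b := by
  have hq : 0 < 1 - p := by linarith
  have h1 : f (p * a) < f (p * b) := by
    apply f_strict (by positivity) (by nlinarith) (by nlinarith)
  have h2 : f ((1 - p) * a) < f ((1 - p) * b) := by
    apply f_strict (by positivity) (by nlinarith) (by nlinarith)
  unfold psi
  have := add_lt_add (mul_lt_mul_of_pos_left h1 hq) (mul_lt_mul_of_pos_left h2 hp0)
  linarith

/-- the deterministic core of the paper's Lemma 1. -/
theorem mi_bound_implies_eps_fair
    (p : ℝ) (hp0 : 0 < p) (hp1 : p < 1)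
    (ε : ℝ) (hε0 : 0 ≤ ε) (hε1 : ε ≤ 1)
    (T : Type*) (d : T → ℝ)
    (hd0 : ∀ τ : T, 0 ≤ d τ) (hd1 : ∀ τ : T, d τ ≤ 1)
    (Itil : ℝ) (hI : ∀ τ : T, psi p (d τ) ≤ Itil)
    (h : Itil - psi p ε ≤ 0) :
    ∀ τ : T, d τ ≤ ε := by
  intro τ
  by_contra hc
  push_neg at hc
  have := psi_strict hp0 hp1 hε0 hc (hd1 τ)
  have := hI τ
  linarith
end
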